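/- (Lemma S2, α-remainder for the non-efficient influence function.) Under the setup and Assumptions A4 and A5, let ω₁ : ℝ^p → ℝ be measurable with ω₁(L*) a version of E[E | σ(L*)] under μ(·|{A = 1, R = 1}). Let η̄₁, ω̄₁ : ℝ^p → ℝ be any bounded measurable functions with η̄₁ ≥ ε' > 0 everywhere. Then E[A·(1 − R/η̄₁(L*))·ω̄₁(L*)] + E[A·R·E/η̄₁(L*)] − E[A·ω₁(L*)] = E[A·(ω̄₁(L*) − ω₁(L*))·(1 − η₁(L*)/η̄₁(L*))]. -/

import Mathlib

open MeasureTheory ProbabilityTheory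
open scoped ENNReal ProbabilityTheory

/-!
Inside expectations against bounded functions of the conditioning variables, both nuisances can be
traded for observed indicators: `E[A u(L*) R] = E[A u(L*) η₁(L*)]` by the tower property on
`σ(L*, A)`, and `E[A R f(L*) E] = E[A R f(L*) ω₁(L*)]` by the tower property under
`μ(· | A = 1, R = 1)`. The second turns the left side into `E[A (ω̄₁ - ω₁)(1 - R/η̄₁)]`, the first
then gives the right side. Since `ω₁` is only pinned down on complete cases, it is positivity of `η`
that makes `ω₁(L*)` bounded on all of `{A = 1}`, so that no integral is a junk value.
-/

namespace MeasureTheory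

variable {Ω β : Type*} {m m0 : MeasurableSpace Ω} {μ : Measure Ω} [IsFiniteMeasure μ]

theorem integral_mul_condExp_of_bound (hm : m ≤ m0) {φ f : Ω → ℝ}
    (hφ : StronglyMeasurable[m] φ) {C : ℝ} (hφC : ∀ᵐ ω ∂μ, |φ ω| ≤ C) (hf : Integrable f μ) :
    ∫ ω, φ ω * f ω ∂μ = ∫ ω, φ ω * (μ[f|m]) ω ∂μ :=
  calc ∫ ω, φ ω * f ω ∂μ = ∫ ω, (μ[φ * f|m]) ω ∂μ := (integral_condExp hm).symm
    _ = _ := integral_congr_ae (condExp_stronglyMeasurable_mul_of_bound hm hφ hf C hφC)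

theorem integral_comp_mul_eq_of_ae_eq_condExp [MeasurableSpace β] {X : Ω → β}
    (hX : Measurable X) {f : Ω → ℝ} (hf : Integrable f μ) {h : β → ℝ}
    (hh : (fun ω => h (X ω)) =ᵐ[μ] μ[f|MeasurableSpace.comap X inferInstance])
    {u : β → ℝ} (hu : Measurable u) {C : ℝ} (huC : ∀ᵐ ω ∂μ, |u (X ω)| ≤ C) :
    ∫ ω, u (X ω) * f ω ∂μ = ∫ ω, u (X ω) * h (X ω) ∂μ := by
  rw [integral_mul_condExp_of_bound (φ := fun ω => u (X ω)) hX.comap_le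
    (hu.comp (comap_measurable X)).stronglyMeasurable huC hf]
  exact integral_congr_ae (by filter_upwards [hh] with ω hω; rw [hω])

end MeasureTheory

namespace ProbabilityTheory

variable {Ω β : Type*} [MeasurableSpace Ω] [MeasurableSpace β] {μ : Measure Ω}
  [IsFiniteMeasure μ] {s : Set Ω}

theorem integral_indicator_eq_measureReal_mul_integral_cond (hs : MeasurableSet s)
    (f : Ω → ℝ) : ∫ ω, s.indicator f ω ∂μ = μ.real s * ∫ ω, f ω ∂μ[|s] := by
  rw [integral_indicator hs, cond, integral_smul_measure, smul_eq_mul, ENNReal.toReal_inv,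
    ← mul_assoc]
  rcases eq_or_ne (μ s) 0 with h0 | h0
  · simp [Measure.restrict_eq_zero.mpr h0]
  · rw [← measureReal_def, mul_inv_cancel₀ ((measureReal_ne_zero_iff).mpr h0), one_mul]

theorem ae_imp_of_ae_cond (hs : MeasurableSet s) {p : Ω → Prop} (h : ∀ᵐ ω ∂μ[|s], p ω) :
    ∀ᵐ ω ∂μ, ω ∈ s → p ω := by
  rw [cond, Measure.ae_ennreal_smul_measure_iff (ENNReal.inv_ne_zero.mpr (measure_ne_top μ s))]
    at h
  exact (ae_restrict_iff' hs).mp h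

theorem integral_indicator_comp_mul_eq_of_ae_eq_condExp_cond (hs : MeasurableSet s)
    {X : Ω → β} (hX : Measurable X) {f : Ω → ℝ} (hf : Integrable f μ[|s]) {h : β → ℝ}
    (hh : (fun ω => h (X ω)) =ᵐ[μ[|s]] μ[|s][f|MeasurableSpace.comap X inferInstance])
    {u : β → ℝ} (hu : Measurable u) {C : ℝ} (huC : ∀ x, |u x| ≤ C) :
    ∫ ω, s.indicator (fun ω => u (X ω) * f ω) ω ∂μ
      = ∫ ω, s.indicator (fun ω => u (X ω) * h (X ω)) ω ∂μ := by
  rw [integral_indicator_eq_measureReal_mul_integral_cond hs,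
    integral_indicator_eq_measureReal_mul_integral_cond hs,
    integral_comp_mul_eq_of_ae_eq_condExp hX hf hh hu (ae_of_all _ fun ω => huC (X ω))]

end ProbabilityTheory

theorem abs_le_one_of_eq_zero_or_eq_one {x : ℝ} (h : x = 0 ∨ x = 1) : |x| ≤ 1 := by
  rcases h with rfl | rfl <;> simp

theorem abs_inv_le_inv_of_le {ε x : ℝ} (hε : 0 < ε) (h : ε ≤ x) : |x⁻¹| ≤ ε⁻¹ := by
  rw [abs_inv, abs_of_pos (hε.trans_le h)]
  exact inv_anti₀ hε h

theorem mul_mul_eq_indicator_complete {Ω : Type*} {A R : Ω → ℝ}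
    (hA01 : ∀ ω, A ω = 0 ∨ A ω = 1) (hR01 : ∀ ω, R ω = 0 ∨ R ω = 1) (F : Ω → ℝ) (ω : Ω) :
    A ω * (R ω * F ω) = {ω | A ω = 1 ∧ R ω = 1}.indicator F ω := by
  rcases hA01 ω with hA | hA <;> rcases hR01 ω with hR | hR <;> simp [hA, hR]

section MissingAtRandom

variable {Ω β : Type*} [MeasurableSpace Ω] [MeasurableSpace β] {μ : Measure Ω}
  {Lstar : Ω → β} {A R : Ω → ℝ}

theorem ae_abs_treated_mul_le (hA01 : ∀ ω, A ω = 0 ∨ A ω = 1) {F : Ω → ℝ} {C : ℝ}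
    (hFC : ∀ᵐ ω ∂μ, A ω = 1 → |F ω| ≤ C) : ∀ᵐ ω ∂μ, |A ω * F ω| ≤ |C| := by
  filter_upwards [hFC] with ω hω
  rcases hA01 ω with hA0 | hA1
  · simp [hA0]
  · simpa [hA1] using (hω hA1).trans (le_abs_self C)

theorem integrable_treated_mul [IsFiniteMeasure μ] (hA : Measurable A)
    (hA01 : ∀ ω, A ω = 0 ∨ A ω = 1) {F : Ω → ℝ} (hF : AEStronglyMeasurable F μ) (C : ℝ)
    (hFC : ∀ᵐ ω ∂μ, A ω = 1 → |F ω| ≤ C) : Integrable (fun ω => A ω * F ω) μ :=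
  .of_bound (hA.aestronglyMeasurable.mul hF) |C| (ae_abs_treated_mul_le hA01 hFC)

theorem integral_treated_mul_response_eq_mul_propensity [IsFiniteMeasure μ]
    (hLstar : Measurable Lstar) (hA : Measurable A) (hA01 : ∀ ω, A ω = 0 ∨ A ω = 1)
    (hR : Integrable R μ)
    {η : β → ℝ → ℝ} (hη : (fun ω => η (Lstar ω) (A ω)) =ᵐ[μ]
      μ[R|MeasurableSpace.comap (fun ω => (Lstar ω, A ω)) inferInstance])
    {u : β → ℝ} (hu : Measurable u) {C : ℝ} (huC : ∀ᵐ ω ∂μ, A ω = 1 → |u (Lstar ω)| ≤ C) :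
    ∫ ω, A ω * (u (Lstar ω) * R ω) ∂μ = ∫ ω, A ω * (u (Lstar ω) * η (Lstar ω) 1) ∂μ := by
  have key := integral_comp_mul_eq_of_ae_eq_condExp (hLstar.prodMk hA) hR
    (h := Function.uncurry η) hη (u := fun z => z.2 * u z.1) (by fun_prop)
    (ae_abs_treated_mul_le hA01 huC)
  calc _ = ∫ ω, A ω * u (Lstar ω) * R ω ∂μ := by simp only [mul_assoc]
    _ = ∫ ω, A ω * u (Lstar ω) * η (Lstar ω) (A ω) ∂μ := key
    _ = _ := integral_congr_ae (ae_of_all _ fun ω => by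
        rcases hA01 ω with h | h <;> simp [h])

theorem ae_treated_abs_propensity_le_one (hR01 : ∀ ω, R ω = 0 ∨ R ω = 1)
    {η : β → ℝ → ℝ} (hη : (fun ω => η (Lstar ω) (A ω)) =ᵐ[μ]
      μ[R|MeasurableSpace.comap (fun ω => (Lstar ω, A ω)) inferInstance]) :
    ∀ᵐ ω ∂μ, A ω = 1 → |η (Lstar ω) 1| ≤ 1 := by
  have hR1 : ∀ᵐ ω ∂μ, |R ω| ≤ 1 := ae_of_all _ fun ω => abs_le_one_of_eq_zero_or_eq_one (hR01 ω)
  filter_upwards [hη, ae_bdd_abs_condExp_of_ae_bdd_abs hR1] with ω hηω hbd hA1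
  calc |η (Lstar ω) 1| = |η (Lstar ω) (A ω)| := by rw [hA1]
    _ ≤ 1 := hηω ▸ hbd

theorem ae_treated_of_ae_complete [IsFiniteMeasure μ] (hLstar : Measurable Lstar)
    (hA : Measurable A) (hA01 : ∀ ω, A ω = 0 ∨ A ω = 1) (hR : Measurable R)
    (hR01 : ∀ ω, R ω = 0 ∨ R ω = 1) {η : β → ℝ → ℝ} (hηmeas : Measurable (Function.uncurry η))
    (hη : (fun ω => η (Lstar ω) (A ω)) =ᵐ[μ]
      μ[R|MeasurableSpace.comap (fun ω => (Lstar ω, A ω)) inferInstance])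
    {ε₀ : ℝ} (hε₀ : 0 < ε₀) (hηpos : ∀ᵐ ω ∂μ, ε₀ ≤ η (Lstar ω) 1)
    {s : Set β} (hs : MeasurableSet s) (h : ∀ᵐ ω ∂μ, A ω = 1 → R ω = 1 → Lstar ω ∈ s) :
    ∀ᵐ ω ∂μ, A ω = 1 → Lstar ω ∈ s := by
  set u : β → ℝ := sᶜ.indicator 1
  have hu : Measurable u := measurable_const.indicator hs.compl
  have hu_nonneg : ∀ x, 0 ≤ u x := fun x => by by_cases hx : x ∈ sᶜ <;> simp [u, hx]
  have hu_bd : ∀ x, |u x| ≤ 1 := fun x => by by_cases hx : x ∈ sᶜ <;> simp [u, hx]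
  have hη₁ := ae_treated_abs_propensity_le_one hR01 hη
  have hzero : ∫ ω, A ω * (u (Lstar ω) * η (Lstar ω) 1) ∂μ = 0 := by
    rw [← integral_treated_mul_response_eq_mul_propensity hLstar hA hA01
      (.of_bound hR.aestronglyMeasurable 1
        (ae_of_all _ fun ω => abs_le_one_of_eq_zero_or_eq_one (hR01 ω)))
      hη hu (ae_of_all _ fun ω _ => hu_bd (Lstar ω))]
    refine integral_eq_zero_of_ae ?_
    filter_upwards [h] with ω hω
    rcases hA01 ω with hA0 | hA1
    · simp [hA0]
    rcases hR01 ω with hR0 | hR1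
    · simp [hR0]
    simp [u, hω hA1 hR1]
  have hint : Integrable (fun ω => A ω * (u (Lstar ω) * η (Lstar ω) 1)) μ := by
    refine integrable_treated_mul hA hA01 (by fun_prop) 1 ?_
    filter_upwards [hη₁] with ω hω hA1
    rw [abs_mul]
    exact mul_le_one₀ (hu_bd _) (abs_nonneg _) (hω hA1)
  have hnn : 0 ≤ᵐ[μ] fun ω => A ω * (u (Lstar ω) * η (Lstar ω) 1) := by
    filter_upwards [hηpos] with ω hω
    rcases hA01 ω with hA0 | hA1
    · simp [hA0]
    · simp only [Pi.zero_apply, hA1, one_mul]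
      exact mul_nonneg (hu_nonneg _) (hε₀.le.trans hω)
  filter_upwards [(integral_eq_zero_iff_of_nonneg_ae hnn hint).mp hzero, hηpos] with ω h0 hω hA1
  by_contra hns
  simp [u, hA1, hns] at h0
  linarith

theorem ae_treated_abs_regression_le_one [IsFiniteMeasure μ] (hLstar : Measurable Lstar)
    (hA : Measurable A) (hA01 : ∀ ω, A ω = 0 ∨ A ω = 1) (hR : Measurable R)
    (hR01 : ∀ ω, R ω = 0 ∨ R ω = 1) {η : β → ℝ → ℝ} (hηmeas : Measurable (Function.uncurry η))
    (hη : (fun ω => η (Lstar ω) (A ω)) =ᵐ[μ]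
      μ[R|MeasurableSpace.comap (fun ω => (Lstar ω, A ω)) inferInstance])
    {ε₀ : ℝ} (hε₀ : 0 < ε₀) (hηpos : ∀ᵐ ω ∂μ, ε₀ ≤ η (Lstar ω) 1)
    {E : Ω → ℝ} (hE : ∀ ω, |E ω| ≤ 1) {ω₁ : β → ℝ} (hω₁meas : Measurable ω₁)
    (hω₁ : (fun ω => ω₁ (Lstar ω)) =ᵐ[μ[|{ω | A ω = 1 ∧ R ω = 1}]]
      μ[|{ω | A ω = 1 ∧ R ω = 1}][E|MeasurableSpace.comap Lstar inferInstance]) :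
    ∀ᵐ ω ∂μ, A ω = 1 → |ω₁ (Lstar ω)| ≤ 1 := by
  have hS : MeasurableSet {ω | A ω = 1 ∧ R ω = 1} :=
    (hA (measurableSet_singleton 1)).inter (hR (measurableSet_singleton 1))
  have hcond : ∀ᵐ ω ∂μ[|{ω | A ω = 1 ∧ R ω = 1}], |ω₁ (Lstar ω)| ≤ 1 := by
    filter_upwards [hω₁, ae_bdd_abs_condExp_of_ae_bdd_abs (ae_of_all _ hE)] with ω hω hbd
    rwa [hω]
  refine ae_treated_of_ae_complete hLstar hA hA01 hR hR01 hηmeas hη hε₀ hηpos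
    (s := {x | |ω₁ x| ≤ 1}) (measurableSet_le (by fun_prop) measurable_const) ?_
  filter_upwards [ae_imp_of_ae_cond hS hcond] with ω hω hA1 hR1
  exact hω ⟨hA1, hR1⟩

theorem integral_treated_ipw_eq [IsFiniteMeasure μ] (hLstar : Measurable Lstar)
    (hA : Measurable A) (hA01 : ∀ ω, A ω = 0 ∨ A ω = 1) (hR : Measurable R)
    (hR01 : ∀ ω, R ω = 0 ∨ R ω = 1) {η : β → ℝ → ℝ} (hηmeas : Measurable (Function.uncurry η))
    (hη : (fun ω => η (Lstar ω) (A ω)) =ᵐ[μ]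
      μ[R|MeasurableSpace.comap (fun ω => (Lstar ω, A ω)) inferInstance])
    {d v : β → ℝ} (hd : Measurable d) (hv : Measurable v) {ε : ℝ} (hε : 0 < ε)
    (hdε : ∀ x, ε ≤ d x) {C : ℝ} (hvC : ∀ᵐ ω ∂μ, A ω = 1 → |v (Lstar ω)| ≤ C) :
    ∫ ω, A ω * v (Lstar ω) * (1 - R ω / d (Lstar ω)) ∂μ
      = ∫ ω, A ω * v (Lstar ω) * (1 - η (Lstar ω) 1 / d (Lstar ω)) ∂μ := by
  have hR_bd : ∀ ω, |R ω| ≤ 1 := fun ω => abs_le_one_of_eq_zero_or_eq_one (hR01 ω)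
  have hη₁ := ae_treated_abs_propensity_le_one hR01 hη
  have hvd : ∀ᵐ ω ∂μ, A ω = 1 → |v (Lstar ω) / d (Lstar ω)| ≤ |C| * ε⁻¹ := by
    filter_upwards [hvC] with ω hω hA1
    rw [div_eq_mul_inv, abs_mul]
    exact mul_le_mul ((hω hA1).trans (le_abs_self _)) (abs_inv_le_inv_of_le hε (hdε _))
      (abs_nonneg _) (abs_nonneg _)
  have hv_int : Integrable (fun ω => A ω * v (Lstar ω)) μ :=
    integrable_treated_mul hA hA01 (hv.comp hLstar).aestronglyMeasurable C hvC
  have hvdR_int : Integrable (fun ω => A ω * (v (Lstar ω) / d (Lstar ω) * R ω)) μ := by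
    refine integrable_treated_mul hA hA01 (by fun_prop) (|C| * ε⁻¹ * 1) ?_
    filter_upwards [hvd] with ω hω hA1
    rw [abs_mul]
    gcongr
    exacts [hω hA1, hR_bd ω]
  have hvdη_int : Integrable (fun ω => A ω * (v (Lstar ω) / d (Lstar ω) * η (Lstar ω) 1)) μ := by
    refine integrable_treated_mul hA hA01 (by fun_prop) (|C| * ε⁻¹ * 1) ?_
    filter_upwards [hvd, hη₁] with ω hω hηω hA1
    rw [abs_mul]
    gcongr
    exacts [hω hA1, hηω hA1]
  calc _ = ∫ ω, A ω * v (Lstar ω) ∂μ - ∫ ω, A ω * (v (Lstar ω) / d (Lstar ω) * R ω) ∂μ := by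
        rw [← integral_sub hv_int hvdR_int]; congr 1; ext ω; ring
    _ = ∫ ω, A ω * v (Lstar ω) ∂μ
          - ∫ ω, A ω * (v (Lstar ω) / d (Lstar ω) * η (Lstar ω) 1) ∂μ := by
        rw [integral_treated_mul_response_eq_mul_propensity hLstar hA hA01
          (.of_bound hR.aestronglyMeasurable 1 (ae_of_all _ hR_bd)) hη
          (u := fun x => v x / d x) (by fun_prop) hvd]
    _ = _ := by rw [← integral_sub hv_int hvdη_int]; congr 1; ext ω; ring

theorem integral_complete_mul_eq_mul_regression [IsFiniteMeasure μ] (hLstar : Measurable Lstar)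
    (hA : Measurable A) (hA01 : ∀ ω, A ω = 0 ∨ A ω = 1) (hR : Measurable R)
    (hR01 : ∀ ω, R ω = 0 ∨ R ω = 1) {E : Ω → ℝ} (hE : Integrable E μ[|{ω | A ω = 1 ∧ R ω = 1}])
    {ω₁ : β → ℝ} (hω₁ : (fun ω => ω₁ (Lstar ω)) =ᵐ[μ[|{ω | A ω = 1 ∧ R ω = 1}]]
      μ[|{ω | A ω = 1 ∧ R ω = 1}][E|MeasurableSpace.comap Lstar inferInstance])
    {u : β → ℝ} (hu : Measurable u) {C : ℝ} (huC : ∀ x, |u x| ≤ C) :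
    ∫ ω, A ω * (R ω * (u (Lstar ω) * E ω)) ∂μ
      = ∫ ω, A ω * (R ω * (u (Lstar ω) * ω₁ (Lstar ω))) ∂μ := by
  have hS : MeasurableSet {ω | A ω = 1 ∧ R ω = 1} :=
    (hA (measurableSet_singleton 1)).inter (hR (measurableSet_singleton 1))
  simp only [mul_mul_eq_indicator_complete hA01 hR01 (fun ω => u (Lstar ω) * E ω),
    mul_mul_eq_indicator_complete hA01 hR01 (fun ω => u (Lstar ω) * ω₁ (Lstar ω))]
  exact integral_indicator_comp_mul_eq_of_ae_eq_condExp_cond hS hLstar hE hω₁ hu huC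

theorem integral_aipw_sub_integral_regression_eq [IsFiniteMeasure μ] (hLstar : Measurable Lstar)
    (hA : Measurable A) (hA01 : ∀ ω, A ω = 0 ∨ A ω = 1) (hR : Measurable R)
    (hR01 : ∀ ω, R ω = 0 ∨ R ω = 1) {E : Ω → ℝ} (hE : Integrable E μ[|{ω | A ω = 1 ∧ R ω = 1}])
    {ω₁ : β → ℝ} (hω₁meas : Measurable ω₁) (hω₁ : (fun ω => ω₁ (Lstar ω))
      =ᵐ[μ[|{ω | A ω = 1 ∧ R ω = 1}]]
      μ[|{ω | A ω = 1 ∧ R ω = 1}][E|MeasurableSpace.comap Lstar inferInstance])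
    {C₁ : ℝ} (hω₁C : ∀ᵐ ω ∂μ, A ω = 1 → |ω₁ (Lstar ω)| ≤ C₁)
    {d v : β → ℝ} (hd : Measurable d) (hv : Measurable v) {ε : ℝ} (hε : 0 < ε)
    (hdε : ∀ x, ε ≤ d x) {C : ℝ} (hvC : ∀ x, |v x| ≤ C) :
    ∫ ω, A ω * (1 - R ω / d (Lstar ω)) * v (Lstar ω) ∂μ
      + ∫ ω, A ω * R ω * E ω / d (Lstar ω) ∂μ - ∫ ω, A ω * ω₁ (Lstar ω) ∂μ
      = ∫ ω, A ω * (v (Lstar ω) - ω₁ (Lstar ω)) * (1 - R ω / d (Lstar ω)) ∂μ := by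
  have hR_bd : ∀ ω, |R ω| ≤ 1 := fun ω => abs_le_one_of_eq_zero_or_eq_one (hR01 ω)
  have hd_bd : ∀ x, |(d x)⁻¹| ≤ ε⁻¹ := fun x => abs_inv_le_inv_of_le hε (hdε x)
  have hv_int : Integrable (fun ω => A ω * (1 - R ω / d (Lstar ω)) * v (Lstar ω)) μ := by
    refine .of_bound (by fun_prop) (1 * (1 + 1 * ε⁻¹) * C) (ae_of_all _ fun ω => ?_)
    rw [Real.norm_eq_abs, abs_mul, abs_mul, div_eq_mul_inv]
    gcongr
    · exact abs_le_one_of_eq_zero_or_eq_one (hA01 ω)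
    · calc _ ≤ |1| + |R ω * (d (Lstar ω))⁻¹| := abs_sub _ _
        _ ≤ 1 + 1 * ε⁻¹ := by rw [abs_one, abs_mul]; gcongr; exacts [hR_bd ω, hd_bd _]
    · exact hvC _
  have hω₁R_int : Integrable (fun ω => A ω * (R ω * ((d (Lstar ω))⁻¹ * ω₁ (Lstar ω)))) μ := by
    refine integrable_treated_mul hA hA01 (by fun_prop) (1 * (ε⁻¹ * C₁)) ?_
    filter_upwards [hω₁C] with ω hω hA1
    rw [abs_mul, abs_mul]
    gcongr
    exacts [hR_bd ω, hd_bd _, hω hA1]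
  have hω₁_int : Integrable (fun ω => A ω * ω₁ (Lstar ω)) μ :=
    integrable_treated_mul hA hA01 (hω₁meas.comp hLstar).aestronglyMeasurable C₁ hω₁C
  have hcomplete : ∫ ω, A ω * R ω * E ω / d (Lstar ω) ∂μ
      = ∫ ω, A ω * (R ω * ((d (Lstar ω))⁻¹ * ω₁ (Lstar ω))) ∂μ := by
    rw [← integral_complete_mul_eq_mul_regression hLstar hA hA01 hR hR01 hE hω₁
      (u := fun x => (d x)⁻¹) hd.inv hd_bd]
    congr 1; ext ω; ring
  rw [hcomplete, ← integral_add hv_int hω₁R_int, ← integral_sub ?_ hω₁_int]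
  · congr 1; ext ω; ring
  · exact hv_int.add hω₁R_int

end MissingAtRandom

theorem stmt_10_general
    {Ω : Type*} [𝓕 : MeasurableSpace Ω]
    (μ : Measure Ω) [IsProbabilityMeasure μ]
    {p q : ℕ}
    (Lstar : Ω → Fin p → ℝ) (L : Ω → Fin q → ℝ) (A R : Ω → ℝ)
    (hLstar : Measurable Lstar) (hL : Measurable L)
    (hA : Measurable A) (hR : Measurable R)
    (hA01 : ∀ ω, A ω = 0 ∨ A ω = 1) (hR01 : ∀ ω, R ω = 0 ∨ R ω = 1)
    (g : (Fin q → ℝ) → ℝ → ℝ) (hg : Measurable (Function.uncurry g))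
    (hg01 : ∀ x a, g x a = 0 ∨ g x a = 1)
    -- Assumption A5 (missingness positivity)
    (η : (Fin p → ℝ) → ℝ → ℝ) (hη : Measurable (Function.uncurry η))
    (hηver : (fun ω => η (Lstar ω) (A ω)) =ᵐ[μ]
      μ[R|MeasurableSpace.comap (fun ω => (Lstar ω, A ω)) inferInstance])
    (ε₀ : ℝ) (hε₀ : 0 < ε₀)
    (hηpos : ∀ᵐ ω ∂μ, ε₀ ≤ η (Lstar ω) 0 ∧ ε₀ ≤ η (Lstar ω) 1)
    -- true nuisance ω₁
    (ω₁ : (Fin p → ℝ) → ℝ) (hω₁ : Measurable ω₁)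
    (hω₁ver : (fun ω => ω₁ (Lstar ω)) =ᵐ[μ[|{ω | A ω = 1 ∧ R ω = 1}]]
      (μ[|{ω | A ω = 1 ∧ R ω = 1}])[(fun ω => g (L ω) (A ω))|MeasurableSpace.comap
          Lstar inferInstance])
    -- estimated (barred) nuisances: bounded measurable, η̄₁ bounded below
    (ηbar₁ : (Fin p → ℝ) → ℝ) (hηbar₁ : Measurable ηbar₁)
    (ε' : ℝ) (hε' : 0 < ε') (hηbar₁lb : ∀ x, ε' ≤ ηbar₁ x)
    (ωbar₁ : (Fin p → ℝ) → ℝ) (hωbar₁ : Measurable ωbar₁)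
    (Cω : ℝ) (hωbar₁bd : ∀ x, |ωbar₁ x| ≤ Cω) :
    ∫ ω, A ω * (1 - R ω / ηbar₁ (Lstar ω)) * ωbar₁ (Lstar ω) ∂μ
      + ∫ ω, A ω * R ω * g (L ω) (A ω) / ηbar₁ (Lstar ω) ∂μ
      - ∫ ω, A ω * ω₁ (Lstar ω) ∂μ
    = ∫ ω, A ω * (ωbar₁ (Lstar ω) - ω₁ (Lstar ω))
          * (1 - η (Lstar ω) 1 / ηbar₁ (Lstar ω)) ∂μ := by
  have hE_bd : ∀ ω, |g (L ω) (A ω)| ≤ 1 := fun ω => abs_le_one_of_eq_zero_or_eq_one (hg01 _ _)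
  have hE_int : Integrable (fun ω => g (L ω) (A ω)) μ[|{ω | A ω = 1 ∧ R ω = 1}] :=
    .of_bound (hg.comp (hL.prodMk hA)).aestronglyMeasurable 1 (ae_of_all _ hE_bd)
  have hω₁_bd := ae_treated_abs_regression_le_one hLstar hA hA01 hR hR01 hη hηver hε₀
    (hηpos.mono fun _ h => h.2) hE_bd hω₁ hω₁ver
  have hv_bd : ∀ᵐ ω ∂μ, A ω = 1 → |ωbar₁ (Lstar ω) - ω₁ (Lstar ω)| ≤ Cω + 1 := by
    filter_upwards [hω₁_bd] with ω hω hA1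
    exact (abs_sub _ _).trans (add_le_add (hωbar₁bd _) (hω hA1))
  rw [integral_aipw_sub_integral_regression_eq hLstar hA hA01 hR hR01 hE_int hω₁ hω₁ver hω₁_bd
      hηbar₁ hωbar₁ hε' hηbar₁lb hωbar₁bd,
    integral_treated_ipw_eq hLstar hA hA01 hR hR01 hη hηver (v := fun x => ωbar₁ x - ω₁ x)
      hηbar₁ (hωbar₁.sub hω₁) hε' hηbar₁lb hv_bd]

/-- **Lemma S2 (α-remainder for the non-efficient influence function).** -/
theorem stmt_10
    {Ω : Type*} [𝓕 : MeasurableSpace Ω] [StandardBorelSpace Ω] [Nonempty Ω]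
    (μ : Measure Ω) [IsProbabilityMeasure μ]
    {p q : ℕ}
    (Lstar : Ω → Fin p → ℝ) (L : Ω → Fin q → ℝ) (A R Y : Ω → ℝ)
    (hLstar : Measurable Lstar) (hL : Measurable L)
    (hA : Measurable A) (hR : Measurable R) (hY : Measurable Y)
    (hA01 : ∀ ω, A ω = 0 ∨ A ω = 1) (hR01 : ∀ ω, R ω = 0 ∨ R ω = 1)
    (hY2 : MemLp Y 2 μ)
    (g : (Fin q → ℝ) → ℝ → ℝ) (hg : Measurable (Function.uncurry g))
    (hg01 : ∀ x a, g x a = 0 ∨ g x a = 1)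
    -- Assumption A4 (MAR): R ⫫ (L, Y) | σ(L*, A)
    (hMAR : CondIndepFun (MeasurableSpace.comap (fun ω => (Lstar ω, A ω)) inferInstance)
      ((hLstar.prodMk hA).comap_le) R (fun ω => (L ω, Y ω)) μ)
    -- Assumption A5 (missingness positivity)
    (η : (Fin p → ℝ) → ℝ → ℝ) (hη : Measurable (Function.uncurry η))
    (hηver : (fun ω => η (Lstar ω) (A ω)) =ᵐ[μ]
      μ[R|MeasurableSpace.comap (fun ω => (Lstar ω, A ω)) inferInstance])
    (ε₀ : ℝ) (hε₀ : 0 < ε₀)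
    (hηpos : ∀ᵐ ω ∂μ, ε₀ ≤ η (Lstar ω) 0 ∧ ε₀ ≤ η (Lstar ω) 1)
    (hA1R : 0 < μ {ω | A ω = 1 ∧ R ω = 1})
    -- true nuisance ω₁
    (ω₁ : (Fin p → ℝ) → ℝ) (hω₁ : Measurable ω₁)
    (hω₁ver : (fun ω => ω₁ (Lstar ω)) =ᵐ[μ[|{ω | A ω = 1 ∧ R ω = 1}]]
      (μ[|{ω | A ω = 1 ∧ R ω = 1}])[(fun ω => g (L ω) (A ω))|MeasurableSpace.comap
          Lstar inferInstance])
    -- estimated (barred) nuisances: bounded measurable, η̄₁ bounded below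
    (ηbar₁ : (Fin p → ℝ) → ℝ) (hηbar₁ : Measurable ηbar₁)
    (Cη : ℝ) (hηbar₁bd : ∀ x, |ηbar₁ x| ≤ Cη)
    (ε' : ℝ) (hε' : 0 < ε') (hηbar₁lb : ∀ x, ε' ≤ ηbar₁ x)
    (ωbar₁ : (Fin p → ℝ) → ℝ) (hωbar₁ : Measurable ωbar₁)
    (Cω : ℝ) (hωbar₁bd : ∀ x, |ωbar₁ x| ≤ Cω) :
    ∫ ω, A ω * (1 - R ω / ηbar₁ (Lstar ω)) * ωbar₁ (Lstar ω) ∂μ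
      + ∫ ω, A ω * R ω * g (L ω) (A ω) / ηbar₁ (Lstar ω) ∂μ
      - ∫ ω, A ω * ω₁ (Lstar ω) ∂μ
    = ∫ ω, A ω * (ωbar₁ (Lstar ω) - ω₁ (Lstar ω))
          * (1 - η (Lstar ω) 1 / ηbar₁ (Lstar ω)) ∂μ :=
  stmt_10_general (𝓕 := 𝓕) μ Lstar L A R hLstar hL hA hR hA01 hR01 g hg hg01 η hη hηver ε₀ hε₀ hηpos
    ω₁ hω₁ hω₁ver ηbar₁ hηbar₁ ε' hε' hηbar₁lb ωbar₁ hωbar₁ Cω hωbar₁bd
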